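/- Let R be an associative ring with additive subgroups R₀ and R₁ such that R = R₀ ⊕ R₁ as an internal direct sum of abelian groups and R₀R₀ ⊆ R₀, R₀R₁ ⊆ R₁, R₁R₀ ⊆ R₁, R₁R₁ ⊆ R₀ (a ℤ₂-grading). Then for every m ≥ 1, δ_m(R) ⊆ R₀ + [R₁,_m R₀], where δ_0(R) = R, δ_{n+1}(R) is the additive subgroup generated by all [a,b] = ab − ba with a,b ∈ δ_n(R), and [R₁,_m R₀] is the additive subgroup generated by all iterated commutators [y, x₁, x₂, …, x_m] = [[…[[y,x₁],x₂],…],x_m] with y ∈ R₁ and x₁,…,x_m ∈ R₀. -/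
import Mathlib


/-- The Lie derived series of an associative ring: `δ 0 = R` and `δ (n+1)` is the additive
subgroup generated by all commutators `[a,b] = a*b - b*a` with `a, b ∈ δ n`. -/
def lieDerivedSeries (R : Type*) [Ring R] : ℕ → AddSubgroup R
  | 0 => ⊤
  | n + 1 => AddSubgroup.closure
      {x : R | ∃ a ∈ lieDerivedSeries R n, ∃ b ∈ lieDerivedSeries R n, x = a * b - b * a}

/-- Iterated bracket `[Y,_m X]` of additive subgroups of an associative ring: the additive
subgroup generated by all left-normed commutators `[y, x₁, …, x_m]` with `y ∈ Y`,
`x_i ∈ X`; here defined recursively with `[Y,_0 X] = Y`. -/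
def addBracketIter {R : Type*} [Ring R] (Y X : AddSubgroup R) : ℕ → AddSubgroup R
  | 0 => Y
  | n + 1 => AddSubgroup.closure
      {z : R | ∃ y ∈ addBracketIter Y X n, ∃ x ∈ X, z = y * x - x * y}

/-- If `R = R₀ ⊕ R₁` is a `ℤ₂`-graded associative ring, then for every `m ≥ 1`,
`δ_m(R) ⊆ R₀ + [R₁,_m R₀]`. -/
theorem stmt_9 (R : Type*) [Ring R] (R₀ R₁ : AddSubgroup R)
    (hsup : R₀ ⊔ R₁ = ⊤) (hdisj : R₀ ⊓ R₁ = ⊥)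
    (h00 : ∀ a ∈ R₀, ∀ b ∈ R₀, a * b ∈ R₀)
    (h01 : ∀ a ∈ R₀, ∀ b ∈ R₁, a * b ∈ R₁)
    (h10 : ∀ a ∈ R₁, ∀ b ∈ R₀, a * b ∈ R₁)
    (h11 : ∀ a ∈ R₁, ∀ b ∈ R₁, a * b ∈ R₀)
    (m : ℕ) (hm : 1 ≤ m) :
    lieDerivedSeries R m ≤ R₀ ⊔ addBracketIter R₁ R₀ m := by
  clear hm hdisj
  have hB : ∀ n, addBracketIter R₁ R₀ n ≤ R₁ := by
    intro n
    induction n with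
    | zero => exact le_rfl
    | succ n ih =>
      rw [addBracketIter]
      refine (AddSubgroup.closure_le _).mpr ?_
      rintro z ⟨y, hy, x, hx, rfl⟩
      exact sub_mem (h10 y (ih hy) x hx) (h01 x hx y (ih hy))
  have key : ∀ n, lieDerivedSeries R n ≤ R₀ ⊔ addBracketIter R₁ R₀ n := by
    intro n
    induction n with
    | zero =>
      rw [lieDerivedSeries, addBracketIter, hsup]
    | succ n ih =>
      rw [lieDerivedSeries]
      refine (AddSubgroup.closure_le _).mpr ?_
      rintro z ⟨a, ha, b, hb, rfl⟩
      obtain ⟨a₀, ha₀, u, hu, rfl⟩ := AddSubgroup.mem_sup.mp (ih ha)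
      obtain ⟨b₀, hb₀, v, hv, rfl⟩ := AddSubgroup.mem_sup.mp (ih hb)
      have e : (a₀ + u) * (b₀ + v) - (b₀ + v) * (a₀ + u)
          = ((a₀ * b₀ - b₀ * a₀) + (u * v - v * u))
            + ((u * b₀ - b₀ * u) + -(v * a₀ - a₀ * v)) := by noncomm_ring
      rw [e]
      refine add_mem
        (AddSubgroup.mem_sup_left (add_mem
          (sub_mem (h00 _ ha₀ _ hb₀) (h00 _ hb₀ _ ha₀))
          (sub_mem (h11 _ (hB n hu) _ (hB n hv)) (h11 _ (hB n hv) _ (hB n hu)))))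
        (AddSubgroup.mem_sup_right (add_mem ?_ (neg_mem ?_)))
      · exact AddSubgroup.subset_closure ⟨u, hu, b₀, hb₀, rfl⟩
      · exact AddSubgroup.subset_closure ⟨v, hv, a₀, ha₀, rfl⟩
  exact key m
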